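/- Let P_k(t) = (t+y_1)(t+y_2)···(t+y_k), and for 1 ≤ s ≤ m and 1 ≤ k ≤ n let Q_{s,k}(t) be the unique polynomial of degree less than k in t congruent to ∏_{j=s}^{m} 1/(x_j − t) modulo P_k(t) (the inverse being taken in the quotient ring R[t]/(P_k(t)) where R is the field of rational functions in the x's and y's). Then the coefficient of t^{k−1} in Q_{s,k}(t) equals F_{s,k}, the weighted sum over Up-Right lattice paths from (m,1) to (s,k) of the product of 1/(x_i+y_j) over visited cells. -/

import Mathlib

/-!
Evaluating the congruence at the nodes `t = -y_j` (`j ≤ k`) gives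
`Q(-y_j) = ∏_{i=s}^m (x_i + y_j)⁻¹`, so Lagrange interpolation writes the coefficient of
`t^{k-1}` as `G(s,k) = ∑_{j ≤ k} ∏_{i=s}^m (x_i + y_j)⁻¹ / ∏_{l ≠ j} (y_l - y_j)`.
Splitting `x_s + y_k = (x_s + y_j) + (y_k - y_j)` gives
`(x_s + y_k) G(s,k) = G(s+1,k) + G(s,k-1)`, which is also the recursion for `F` obtained by
removing the last cell of a path. The boundary values agree too (`G(m+1,k) = 0` for `k ≥ 2`,
being the coefficient of `t^{k-1}` in the interpolant of the constant `1`), so `G = F`.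
-/

open Finset

noncomputable section

/-- The field of rational functions over `ℚ` in variables `x_1, x_2, …` and `y_1, y_2, …`. -/
abbrev K : Type := FractionRing (MvPolynomial (ℕ ⊕ ℕ) ℚ)

/-- The variable `x_i` as an element of `K`. -/
def X (i : ℕ) : K := algebraMap (MvPolynomial (ℕ ⊕ ℕ) ℚ) K (MvPolynomial.X (Sum.inl i))

/-- The variable `y_j` as an element of `K`. -/
def Y (j : ℕ) : K := algebraMap (MvPolynomial (ℕ ⊕ ℕ) ℚ) K (MvPolynomial.X (Sum.inr j))

/-- A step of an Up-Right lattice path: `Up` decreases the first (row) coordinate by one,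
`Right` increases the second (column) coordinate by one. -/
def Step (c d : ℕ × ℕ) : Prop :=
  (d.1 + 1 = c.1 ∧ d.2 = c.2) ∨ (d.1 = c.1 ∧ d.2 = c.2 + 1)

/-- `p` is an Up-Right lattice path from cell `A` to cell `B` (listed as its sequence of
visited cells, starting at `A` and ending at `B`). -/
def IsPath (A B : ℕ × ℕ) (p : List (ℕ × ℕ)) : Prop :=
  p.Chain' Step ∧ p.head? = some A ∧ p.getLast? = some B

/-- All cells of `p` lie in the grid `{1,…,m} × {1,…,n}`. -/
def InGrid (m n : ℕ) (p : List (ℕ × ℕ)) : Prop :=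
  ∀ c ∈ p, 1 ≤ c.1 ∧ c.1 ≤ m ∧ 1 ≤ c.2 ∧ c.2 ≤ n

/-- The weight of a path: the product of `1/(x_i + y_j)` over all visited cells `(i,j)`. -/
def pathWeight (x y : ℕ → K) (p : List (ℕ × ℕ)) : K :=
  (p.map fun c => (x c.1 + y c.2)⁻¹).prod

/-- The single-path partition function: the sum of weights of all Up-Right lattice paths
from `A` to `B` inside the grid `{1,…,m} × {1,…,n}`. -/
def F1 (m n : ℕ) (x y : ℕ → K) (A B : ℕ × ℕ) : K :=
  ∑ᶠ p : {p : List (ℕ × ℕ) // IsPath A B p ∧ InGrid m n p}, pathWeight x y p.1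

/-- `γ` is a `k`-tuple of pairwise vertex-disjoint Up-Right lattice paths `γ i : A i → B i`
inside the grid `{1,…,m} × {1,…,n}`. -/
def IsTuple (m n k : ℕ) (A B : Fin k → ℕ × ℕ) (γ : Fin k → List (ℕ × ℕ)) : Prop :=
  (∀ i, IsPath (A i) (B i) (γ i) ∧ InGrid m n (γ i)) ∧
  (∀ i j, i ≠ j → ∀ c ∈ γ i, c ∉ γ j)

/-- The multi-path partition function: the sum, over all `k`-tuples of pairwise disjoint
Up-Right lattice paths `γ i : A i → B i` in the grid `{1,…,m} × {1,…,n}`, of the product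
of `1/(x_i + y_j)` over all visited cells. -/
def Ftuple (m n k : ℕ) (x y : ℕ → K) (A B : Fin k → ℕ × ℕ) : K :=
  ∑ᶠ γ : {γ : Fin k → List (ℕ × ℕ) // IsTuple m n k A B γ}, ∏ i, pathWeight x y (γ.1 i)

theorem Step.diag_succ {c d : ℕ × ℕ} (h : Step c d) : (d.2 : ℤ) - d.1 = c.2 - c.1 + 1 := by
  rcases h with ⟨h₁, h₂⟩ | ⟨h₁, h₂⟩ <;> omega

theorem step_iff_eq_or_eq {C B : ℕ × ℕ} (hB : 1 ≤ B.2) :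
    Step C B ↔ C = (B.1 + 1, B.2) ∨ C = (B.1, B.2 - 1) := by
  obtain ⟨c₁, c₂⟩ := C
  obtain ⟨b₁, b₂⟩ := B
  simp only [Step, Prod.mk.injEq] at hB ⊢
  omega

namespace IsPath

theorem length_eq : ∀ {A B : ℕ × ℕ} {p : List (ℕ × ℕ)}, IsPath A B p →
    (p.length : ℤ) = ((B.2 : ℤ) - B.1) - ((A.2 : ℤ) - A.1) + 1
  | _, _, [], ⟨_, h, _⟩ => by simp at h
  | _, _, [c], ⟨_, h₁, h₂⟩ => by simp_all
  | A, B, c :: d :: t, ⟨hch, h₁, h₂⟩ => by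
    obtain rfl : c = A := by simpa using h₁
    have hstep := (List.isChain_cons_cons.mp hch).1.diag_succ
    have htail := length_eq (p := d :: t) ⟨hch.tail, rfl, by simpa using h₂⟩
    simp only [List.length_cons] at htail ⊢
    push_cast at htail ⊢
    omega

theorem eq_singleton {A : ℕ × ℕ} {p : List (ℕ × ℕ)} (hp : IsPath A A p) : p = [A] := by
  have hlen : p.length = 1 := by have := hp.length_eq; omega
  obtain ⟨c, rfl⟩ := List.length_eq_one_iff.mp hlen
  simpa using hp.2.1

theorem concat {A B C : ℕ × ℕ} {q : List (ℕ × ℕ)} (hq : IsPath A C q) (hCB : Step C B) :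
    IsPath A B (q ++ [B]) := by
  obtain ⟨hch, hhead, hlast⟩ := hq
  have hne : q ≠ [] := by rintro rfl; simp at hhead
  refine ⟨List.isChain_append.mpr ⟨hch, List.isChain_singleton _, ?_⟩, ?_, by simp⟩
  · simp_all
  · rwa [List.head?_append_of_ne_nil _ hne]

theorem eq_concat {A B : ℕ × ℕ} {p : List (ℕ × ℕ)} (hp : IsPath A B p) (hAB : B ≠ A) :
    ∃ q C, IsPath A C q ∧ Step C B ∧ p = q ++ [B] := by
  obtain ⟨hch, hhead, hlast⟩ := hp
  rcases p.eq_nil_or_concat with rfl | ⟨q, b, rfl⟩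
  · simp at hhead
  rw [List.concat_eq_append] at *
  obtain rfl : b = B := by simpa using hlast
  rcases q.eq_nil_or_concat with rfl | ⟨q, C, rfl⟩
  · exact absurd (by simpa using hhead) hAB
  rw [List.concat_eq_append] at *
  obtain ⟨hch, -, hCB⟩ := List.isChain_append.mp hch
  refine ⟨q ++ [C], C, ⟨hch, ?_, by simp⟩, by simpa using hCB, rfl⟩
  rcases q with _ | _ <;> simp_all

end IsPath

def grid (m n : ℕ) : Finset (ℕ × ℕ) := Icc 1 m ×ˢ Icc 1 n

theorem mem_grid {m n : ℕ} {c : ℕ × ℕ} :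
    c ∈ grid m n ↔ 1 ≤ c.1 ∧ c.1 ≤ m ∧ 1 ≤ c.2 ∧ c.2 ≤ n := by
  simp [grid, and_assoc]

theorem inGrid_iff {m n : ℕ} {p : List (ℕ × ℕ)} : InGrid m n p ↔ ∀ c ∈ p, c ∈ grid m n := by
  simp only [InGrid, mem_grid]

def gridPaths (m n : ℕ) (A B : ℕ × ℕ) : Set (List (ℕ × ℕ)) :=
  {p | IsPath A B p ∧ InGrid m n p}

variable {m n : ℕ} {A B : ℕ × ℕ}

theorem gridPaths_eq_empty (hB : B ∉ grid m n) : gridPaths m n A B = ∅ :=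
  Set.eq_empty_of_forall_notMem fun _ ⟨⟨_, _, hlast⟩, hgrid⟩ ↦
    hB (inGrid_iff.mp hgrid B (List.mem_of_getLast? hlast))

theorem gridPaths_self (hA : A ∈ grid m n) : gridPaths m n A A = {[A]} := by
  ext p
  refine ⟨fun hp ↦ hp.1.eq_singleton, ?_⟩
  rintro rfl
  exact ⟨⟨List.isChain_singleton _, rfl, rfl⟩, inGrid_iff.mpr (by simpa using hA)⟩

theorem gridPaths_eq_image_union (hAB : B ≠ A) (hB : B ∈ grid m n) :
    gridPaths m n A B =
      (· ++ [B]) '' (gridPaths m n A (B.1 + 1, B.2) ∪ gridPaths m n A (B.1, B.2 - 1)) := by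
  have hB2 : 1 ≤ B.2 := (mem_grid.mp hB).2.2.1
  ext p
  constructor
  · rintro ⟨hp, hgrid⟩
    obtain ⟨q, C, hq, hCB, rfl⟩ := hp.eq_concat hAB
    have hqgrid : InGrid m n q := fun c hc ↦ hgrid c (List.mem_append_left _ hc)
    rcases (step_iff_eq_or_eq hB2).mp hCB with rfl | rfl
    exacts [⟨q, Or.inl ⟨hq, hqgrid⟩, rfl⟩, ⟨q, Or.inr ⟨hq, hqgrid⟩, rfl⟩]
  · rintro ⟨q, hq, rfl⟩
    obtain ⟨C, hCB, hq, hqgrid⟩ : ∃ C, Step C B ∧ IsPath A C q ∧ InGrid m n q := by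
      rcases hq with hq | hq
      exacts [⟨_, (step_iff_eq_or_eq hB2).mpr (Or.inl rfl), hq⟩,
        ⟨_, (step_iff_eq_or_eq hB2).mpr (Or.inr rfl), hq⟩]
    refine ⟨hq.concat hCB, inGrid_iff.mpr fun c hc ↦ ?_⟩
    rcases List.mem_append.mp hc with hc | hc
    · exact inGrid_iff.mp hqgrid c hc
    · rwa [List.mem_singleton.mp hc]

theorem gridPaths_finite : (gridPaths m n A B).Finite := by
  refine ((List.finite_length_eq (grid m n)
    (((B.2 : ℤ) - B.1 - ((A.2 : ℤ) - A.1) + 1).toNat)).image (List.map Subtype.val)).subset ?_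
  rintro p ⟨hp, hgrid⟩
  lift p to List (grid m n) using inGrid_iff.mp hgrid
  refine ⟨p, ?_, rfl⟩
  have := hp.length_eq
  simp only [List.length_map] at this
  change p.length = _
  omega

theorem gridPaths_disjoint {B' : ℕ × ℕ} (h : B ≠ B') :
    Disjoint (gridPaths m n A B) (gridPaths m n A B') :=
  Set.disjoint_left.mpr fun _ ⟨⟨_, _, hB⟩, _⟩ ⟨⟨_, _, hB'⟩, _⟩ ↦ h (by simpa [hB] using hB')

theorem F1_eq_finsum_mem (x y : ℕ → K) :
    F1 m n x y A B = ∑ᶠ p ∈ gridPaths m n A B, pathWeight x y p :=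
  finsum_set_coe_eq_finsum_mem _

theorem F1_eq_zero (x y : ℕ → K) (hB : B ∉ grid m n) : F1 m n x y A B = 0 := by
  rw [F1_eq_finsum_mem, gridPaths_eq_empty hB, finsum_mem_empty]

theorem F1_self (x y : ℕ → K) (hA : A ∈ grid m n) : F1 m n x y A A = (x A.1 + y A.2)⁻¹ := by
  simp [F1_eq_finsum_mem, gridPaths_self hA, pathWeight]

theorem F1_eq_inv_mul_add (x y : ℕ → K) (hAB : B ≠ A) (hB : B ∈ grid m n) :
    F1 m n x y A B =
      (x B.1 + y B.2)⁻¹ * (F1 m n x y A (B.1 + 1, B.2) + F1 m n x y A (B.1, B.2 - 1)) := by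
  rw [F1_eq_finsum_mem, gridPaths_eq_image_union hAB hB,
    finsum_mem_image (List.append_left_injective [B]).injOn,
    finsum_mem_union (gridPaths_disjoint (by simp)) gridPaths_finite gridPaths_finite,
    F1_eq_finsum_mem, F1_eq_finsum_mem, mul_comm, add_mul, finsum_mem_mul, finsum_mem_mul]
  simp [pathWeight]

theorem Polynomial.eval_eq_inv_of_dvd_mul_sub_one {F : Type*} [Field F] {P Q R : Polynomial F}
    {a : F} (hPQR : P ∣ Q * R - 1) (hP : P.eval a = 0) : Q.eval a = (R.eval a)⁻¹ := by
  obtain ⟨S, hS⟩ := hPQR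
  have h := congrArg (Polynomial.eval a) hS
  simp only [Polynomial.eval_sub, Polynomial.eval_mul, Polynomial.eval_one, hP, zero_mul,
    sub_eq_zero] at h
  exact eq_inv_of_mul_eq_one_left h

section LagrangeSum

variable {F : Type*} [Field F] (x y : ℕ → F)

def lagrangeWeight (k j : ℕ) : F := (∏ l ∈ (Icc 1 k).erase j, (y l - y j))⁻¹

def lagrangeSum (m s k : ℕ) : F :=
  ∑ j ∈ Icc 1 k, (∏ i ∈ Icc s m, (x i + y j))⁻¹ * lagrangeWeight y k j

variable {x y}

theorem coeff_pred_eq_sum_lagrangeWeight (hy : Function.Injective y) {k : ℕ}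
    {P : Polynomial F} (hP : P.degree < k) :
    P.coeff (k - 1) = ∑ j ∈ Icc 1 k, P.eval (-y j) * lagrangeWeight y k j := by
  have hcard : #(Icc 1 k) = k := by simp
  have := Lagrange.coeff_eq_sum (s := Icc 1 k) ((neg_injective.comp hy).injOn) (hcard ▸ hP)
  rw [hcard] at this
  simp_rw [this, lagrangeWeight, div_eq_mul_inv, Function.comp_apply, neg_sub_neg]

theorem sum_lagrangeWeight (hy : Function.Injective y) {k : ℕ} (hk : 2 ≤ k) :
    ∑ j ∈ Icc 1 k, lagrangeWeight y k j = 0 := by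
  have h := coeff_pred_eq_sum_lagrangeWeight hy (P := 1) (k := k)
    (by rw [Polynomial.degree_one]; exact_mod_cast (by omega : 0 < k))
  rw [Polynomial.coeff_one, if_neg (by omega)] at h
  simpa using h.symm

theorem lagrangeWeight_succ {k j : ℕ} (hj : j ∈ Icc 1 k) :
    lagrangeWeight y (k + 1) j = (y (k + 1) - y j)⁻¹ * lagrangeWeight y k j := by
  have hjk : j ≤ k := (mem_Icc.mp hj).2
  rw [lagrangeWeight, lagrangeWeight, ← mul_inv,
    ← insert_Icc_right_eq_Icc_add_one (by omega), erase_insert_of_ne (by omega),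
    prod_insert (by simp)]

theorem lagrangeSum_zero (m s : ℕ) : lagrangeSum x y m s 0 = 0 := by
  simp [lagrangeSum]

theorem lagrangeSum_self_one (m : ℕ) : lagrangeSum x y m m 1 = (x m + y 1)⁻¹ := by
  simp [lagrangeSum, lagrangeWeight]

theorem lagrangeSum_succ_self (hy : Function.Injective y) {m k : ℕ} (hk : 2 ≤ k) :
    lagrangeSum x y m (m + 1) k = 0 := by
  simpa [lagrangeSum] using sum_lagrangeWeight hy hk

theorem lagrangeSum_rec (hxy : ∀ i j, x i + y j ≠ 0) (hy : Function.Injective y) {m s k : ℕ}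
    (hsm : s ≤ m) :
    (x s + y (k + 1)) * lagrangeSum x y m s (k + 1) =
      lagrangeSum x y m (s + 1) (k + 1) + lagrangeSum x y m s k := by
  have hterm (j : ℕ) :
      (x s + y (k + 1)) * ((∏ i ∈ Icc s m, (x i + y j))⁻¹ * lagrangeWeight y (k + 1) j) =
        (∏ i ∈ Icc (s + 1) m, (x i + y j))⁻¹ * lagrangeWeight y (k + 1) j +
          (∏ i ∈ Icc s m, (x i + y j))⁻¹ * ((y (k + 1) - y j) * lagrangeWeight y (k + 1) j) := by
    rw [← insert_Icc_add_one_left_eq_Icc hsm, prod_insert (by simp), mul_inv]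
    have := hxy s j
    field_simp
    ring
  rw [lagrangeSum, mul_sum, sum_congr rfl fun j _ ↦ hterm j, sum_add_distrib]
  refine congrArg₂ _ rfl ?_
  rw [sum_Icc_succ_top (by omega), sub_self, zero_mul, mul_zero, add_zero]
  refine sum_congr rfl fun j hj ↦ ?_
  have hjk : k + 1 ≠ j := by rw [mem_Icc] at hj; omega
  rw [lagrangeWeight_succ hj, mul_inv_cancel_left₀ (sub_ne_zero.mpr (hy.ne hjk))]

end LagrangeSum

/-- Row `m + 1` and column `0` are included, where both sides vanish except at `(m + 1, 1)`, so
that the recursion needs no boundary cases. -/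
theorem lagrangeSum_eq_F1 {x y : ℕ → K} (hxy : ∀ i j, x i + y j ≠ 0)
    (hy : Function.Injective y) {m n : ℕ} (s k : ℕ) (hs : 1 ≤ s) (hsm : s ≤ m + 1) (hkn : k ≤ n)
    (hsk : (s, k) ≠ (m + 1, 1)) :
    lagrangeSum x y m s k = F1 m n x y (m, 1) (s, k) := by
  by_cases hgrid : (s, k) ∈ grid m n
  · by_cases hbase : (s, k) = (m, 1)
    · obtain ⟨rfl, rfl⟩ := Prod.mk.inj hbase
      exact (lagrangeSum_self_one _).trans (F1_self x y hgrid).symm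
    obtain ⟨-, hsm, hk, -⟩ := mem_grid.mp hgrid
    obtain ⟨k, rfl⟩ : ∃ k', k = k' + 1 := ⟨k - 1, by omega⟩
    have hup := lagrangeSum_eq_F1 hxy hy (m := m) (n := n) (s + 1) (k + 1) (by omega)
      (by omega) hkn (by simp only [ne_eq, Prod.mk.injEq] at hbase ⊢; omega)
    have hleft := lagrangeSum_eq_F1 hxy hy (m := m) (n := n) s k hs (by omega) (by omega)
      (by simp; omega)
    rw [F1_eq_inv_mul_add x y hbase hgrid, add_tsub_cancel_right, ← hup, ← hleft,
      ← lagrangeSum_rec hxy hy hsm, inv_mul_cancel_left₀ (hxy s (k + 1))]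
  · rw [F1_eq_zero x y hgrid]
    rcases Nat.eq_zero_or_pos k with rfl | hk
    · exact lagrangeSum_zero m s
    · have hs : s = m + 1 := by simp only [mem_grid] at hgrid; omega
      subst hs
      simp only [ne_eq, Prod.mk.injEq, true_and] at hsk
      exact lagrangeSum_succ_self hy (by omega)
termination_by m + 1 - s + k

theorem Y_injective : Function.Injective Y := fun _ _ h ↦
  Sum.inr_injective (MvPolynomial.X_injective (IsFractionRing.injective _ K h))

theorem X_add_Y_ne_zero (i j : ℕ) : X i + Y j ≠ 0 := by
  rw [X, Y, ← map_add, map_ne_zero_iff _ (IsFractionRing.injective _ K)]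
  intro h
  simpa [two_ne_zero] using congrArg (MvPolynomial.eval fun _ ↦ (1 : ℚ)) h

theorem stmt10_general (m n s k : ℕ) (hs : 1 ≤ s) (hsm : s ≤ m) (hkn : k ≤ n)
    (Q : Polynomial K) (hdeg : Q.degree < (k : ℕ))
    (hQ : (∏ j ∈ Finset.Icc 1 k, (Polynomial.X + Polynomial.C (Y j))) ∣
        Q * (∏ j ∈ Finset.Icc s m, (Polynomial.C (X j) - Polynomial.X)) - 1) :
    Q.coeff (k - 1) = F1 m n X Y (m, 1) (s, k) := by
  have heval (j : ℕ) (hj : j ∈ Icc 1 k) :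
      Q.eval (-Y j) = (∏ i ∈ Icc s m, (X i + Y j))⁻¹ := by
    refine (Polynomial.eval_eq_inv_of_dvd_mul_sub_one hQ ?_).trans ?_
    · rw [Polynomial.eval_prod]
      exact prod_eq_zero hj (by simp)
    · simp [Polynomial.eval_prod, sub_neg_eq_add]
  rw [coeff_pred_eq_sum_lagrangeWeight Y_injective hdeg, sum_congr rfl fun j hj ↦ by
    rw [heval j hj]]
  exact lagrangeSum_eq_F1 X_add_Y_ne_zero Y_injective s k hs (by omega) hkn (by simp; omega)

/-- With `P_k(t) = (t+y_1)⋯(t+y_k)`, if `Q` is the polynomial of degree `< k` congruent to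
`∏_{j=s}^m 1/(x_j − t)` modulo `P_k(t)` (expressed by saying that
`Q·∏_{j=s}^m (x_j − t) − 1` is divisible by `P_k(t)`), then the coefficient of `t^{k−1}`
in `Q` equals `F_{s,k}`, the weighted sum over Up-Right lattice paths from `(m,1)` to
`(s,k)` in the grid `{1,…,m} × {1,…,n}`. -/
theorem stmt10 (m n s k : ℕ) (hs : 1 ≤ s) (hsm : s ≤ m) (hk : 1 ≤ k) (hkn : k ≤ n)
    (Q : Polynomial K) (hdeg : Q.degree < (k : ℕ))
    (hQ : (∏ j ∈ Finset.Icc 1 k, (Polynomial.X + Polynomial.C (Y j))) ∣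
        Q * (∏ j ∈ Finset.Icc s m, (Polynomial.C (X j) - Polynomial.X)) - 1) :
    Q.coeff (k - 1) = F1 m n X Y (m, 1) (s, k) :=
  stmt10_general m n s k hs hsm hkn Q hdeg hQ
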